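/- arXiv:2605.30827 — 6 statements merged into one kernel-verified Lean document; each statement's English description precedes it below -/
import Mathlib

section
/- Contraction estimate for the DGC iteration map: if ‖∇̄H(ȳ, v)‖ ≥ C > 0 and ‖∇̄H(ȳ, w) − ∇̄H(ȳ, v)‖ ≤ L₀‖w − v‖ for all v, w in a set S, then for all v, w ∈ S, ‖g(ȳ, w) − g(ȳ, v)‖ ≤ (L₀/C²)|H(y₀) − H(ȳ)| · ‖w − v‖, where g(ȳ, v) = ȳ + [(H(y₀) − H(ȳ))/‖∇̄H(ȳ, v)‖²] ∇̄H(ȳ, v). -/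
/-- `z ↦ (1 / ‖z‖) ^ 2 • z` is the inversion in the unit sphere, which scales the distance of
`x` and `y` by `1 / (‖x‖ * ‖y‖)`. -/
theorem norm_div_norm_sq_smul_sub_le {F : Type*} [NormedAddCommGroup F] [InnerProductSpace ℝ F]
    {x y : F} {C : ℝ} (c : ℝ) (hC : 0 < C) (hx : C ≤ ‖x‖) (hy : C ≤ ‖y‖) :
    ‖(c / ‖x‖ ^ 2) • x - (c / ‖y‖ ^ 2) • y‖ ≤ |c| / C ^ 2 * ‖x - y‖ := by
  have hx₀ : x ≠ 0 := norm_pos_iff.mp (hC.trans_le hx)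
  have hy₀ : y ≠ 0 := norm_pos_iff.mp (hC.trans_le hy)
  have hinv := dist_div_norm_sq_smul hx₀ hy₀ 1
  have hsmul (z : F) : (c / ‖z‖ ^ 2) • z = c • ((1 / ‖z‖) ^ 2 • z) := by
    rw [smul_smul, div_pow, one_pow, ← div_eq_mul_one_div]
  calc ‖(c / ‖x‖ ^ 2) • x - (c / ‖y‖ ^ 2) • y‖
      = |c| * (1 / (‖x‖ * ‖y‖)) * ‖x - y‖ := by
        rw [hsmul, hsmul, ← smul_sub, norm_smul, ← dist_eq_norm, hinv, one_pow, dist_eq_norm,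
          Real.norm_eq_abs, mul_assoc]
    _ ≤ |c| * (1 / C ^ 2) * ‖x - y‖ := by
        gcongr
        rw [sq]
        gcongr
    _ = |c| / C ^ 2 * ‖x - y‖ := by ring

theorem dgc_contraction_estimate_general (d : ℕ) (H : EuclideanSpace ℝ (Fin d) → ℝ)
    (y₀ ybar : EuclideanSpace ℝ (Fin d))
    (dg : EuclideanSpace ℝ (Fin d) → EuclideanSpace ℝ (Fin d) → EuclideanSpace ℝ (Fin d))
    (S : Set (EuclideanSpace ℝ (Fin d)))
    (C L₀ : ℝ) (hC : 0 < C)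
    (hlow : ∀ v ∈ S, C ≤ ‖dg ybar v‖)
    (hlip : ∀ v ∈ S, ∀ w ∈ S, ‖dg ybar w - dg ybar v‖ ≤ L₀ * ‖w - v‖) :
    ∀ v ∈ S, ∀ w ∈ S,
      ‖(ybar + ((H y₀ - H ybar) / ‖dg ybar w‖ ^ 2) • dg ybar w) -
        (ybar + ((H y₀ - H ybar) / ‖dg ybar v‖ ^ 2) • dg ybar v)‖
        ≤ (L₀ / C ^ 2) * |H y₀ - H ybar| * ‖w - v‖ := by
  intro v hv w hw
  rw [add_sub_add_left_eq_sub]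
  calc _ ≤ |H y₀ - H ybar| / C ^ 2 * ‖dg ybar w - dg ybar v‖ :=
        norm_div_norm_sq_smul_sub_le _ hC (hlow w hw) (hlow v hv)
    _ ≤ |H y₀ - H ybar| / C ^ 2 * (L₀ * ‖w - v‖) := by gcongr; exact hlip v hv w hw
    _ = (L₀ / C ^ 2) * |H y₀ - H ybar| * ‖w - v‖ := by ring

/-- Contraction estimate for the DGC iteration map. -/
theorem dgc_contraction_estimate (d : ℕ) (H : EuclideanSpace ℝ (Fin d) → ℝ)
    (y₀ ybar : EuclideanSpace ℝ (Fin d))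
    (dg : EuclideanSpace ℝ (Fin d) → EuclideanSpace ℝ (Fin d) → EuclideanSpace ℝ (Fin d))
    (S : Set (EuclideanSpace ℝ (Fin d)))
    (C L₀ : ℝ) (hC : 0 < C) (hL₀ : 0 < L₀)
    (hlow : ∀ v ∈ S, C ≤ ‖dg ybar v‖)
    (hlip : ∀ v ∈ S, ∀ w ∈ S, ‖dg ybar w - dg ybar v‖ ≤ L₀ * ‖w - v‖) :
    ∀ v ∈ S, ∀ w ∈ S,
      ‖(ybar + ((H y₀ - H ybar) / ‖dg ybar w‖ ^ 2) • dg ybar w) -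
        (ybar + ((H y₀ - H ybar) / ‖dg ybar v‖ ^ 2) • dg ybar v)‖
        ≤ (L₀ / C ^ 2) * |H y₀ - H ybar| * ‖w - v‖ :=
  dgc_contraction_estimate_general d H y₀ ybar dg S C L₀ hC hlow hlip
end

section
/- Uniqueness of the DGC correction: under the lower bound ‖∇̄H(ȳ, v)‖ ≥ C > 0 and local Lipschitz continuity ‖∇̄H(ȳ, w) − ∇̄H(ȳ, v)‖ ≤ L₀‖w − v‖ on a complete set S mapped into itself by g(ȳ, ·), if (L₀/C²)|H(y₀) − H(ȳ)| < 1 then the equation y = g(ȳ, y) has a unique solution in S, obtained as the limit of the fixed point iteration from any starting point. -/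
/-!
The map `v ↦ v / ‖v‖²` is the inversion in the unit sphere, so
`‖a / ‖a‖² - b / ‖b‖²‖ = ‖a - b‖ / (‖a‖ ‖b‖)`. With `‖∇̄H(ȳ, ·)‖ ≥ C` and `∇̄H(ȳ, ·)` being
`L₀`-Lipschitz on `S`, the map `g(ȳ, ·)` is therefore `(L₀ / C²) |H(y₀) - H(ȳ)|`-Lipschitz on the
complete set `S`, i.e. a contraction of `S`, and the Banach fixed point theorem applies.
-/

open Filter Topology Function

open EuclideanGeometry in
theorem norm_inv_norm_sq_smul_sub_inv_norm_sq_smul {E : Type*} [NormedAddCommGroup E]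
    [InnerProductSpace ℝ E] {a b : E} (ha : a ≠ 0) (hb : b ≠ 0) :
    ‖(‖a‖ ^ 2)⁻¹ • a - (‖b‖ ^ 2)⁻¹ • b‖ = ‖a - b‖ / (‖a‖ * ‖b‖) := by
  have := dist_inversion_inversion ha hb 1
  simp only [inversion, vsub_eq_sub, sub_zero, vadd_eq_add, add_zero, one_div, inv_pow,
    one_pow, dist_eq_norm] at this
  simpa [div_eq_inv_mul] using this

theorem dist_div_norm_sq_smul_le {X E : Type*} [PseudoMetricSpace X] [NormedAddCommGroup E]
    [InnerProductSpace ℝ E] {F : X → E} {S : Set X} {C L : ℝ} (c : ℝ) (hC : 0 < C)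
    (hlow : ∀ v ∈ S, C ≤ ‖F v‖) (hlip : ∀ v ∈ S, ∀ w ∈ S, ‖F w - F v‖ ≤ L * dist w v)
    {v w : X} (hv : v ∈ S) (hw : w ∈ S) :
    dist ((c / ‖F w‖ ^ 2) • F w) ((c / ‖F v‖ ^ 2) • F v) ≤ L / C ^ 2 * |c| * dist w v := by
  have hCv := hlow v hv
  have hCw := hlow w hw
  have hFv : F v ≠ 0 := norm_pos_iff.1 (hC.trans_le hCv)
  have hFw : F w ≠ 0 := norm_pos_iff.1 (hC.trans_le hCw)
  have hdist : dist ((c / ‖F w‖ ^ 2) • F w) ((c / ‖F v‖ ^ 2) • F v)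
      = |c| * (‖F w - F v‖ / (‖F w‖ * ‖F v‖)) := by
    simp_rw [dist_eq_norm, div_eq_mul_inv c, ← smul_smul, ← smul_sub, norm_smul,
      Real.norm_eq_abs, norm_inv_norm_sq_smul_sub_inv_norm_sq_smul hFw hFv]
  have hquot : ‖F w - F v‖ / (‖F w‖ * ‖F v‖) ≤ L * dist w v / (C * C) :=
    div_le_div₀ ((norm_nonneg _).trans (hlip v hv w hw)) (hlip v hv w hw) (by positivity)
      (mul_le_mul hCw hCv hC.le (norm_nonneg _))
  calc _ = |c| * (‖F w - F v‖ / (‖F w‖ * ‖F v‖)) := hdist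
    _ ≤ |c| * (L * dist w v / (C * C)) := by gcongr
    _ = L / C ^ 2 * |c| * dist w v := by ring

theorem LipschitzOnWith.exists_unique_isFixedPt_tendsto_iterate {X : Type*} [MetricSpace X]
    {f : X → X} {S : Set X} {K : NNReal} (hf : LipschitzOnWith K f S) (hK : K < 1)
    (hmaps : Set.MapsTo f S S) (hS : S.Nonempty) (hScomplete : IsComplete S) :
    ∃ y ∈ S, IsFixedPt f y ∧ (∀ z ∈ S, IsFixedPt f z → z = y) ∧
      ∀ x ∈ S, Tendsto (fun n => f^[n] x) atTop (𝓝 y) := by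
  have : Nonempty S := hS.to_subtype
  have : CompleteSpace S := hScomplete.completeSpace_coe
  have hcontr : ContractingWith K (hmaps.restrict f S S) :=
    ⟨hK, fun x y => hf x.2 y.2⟩
  set y := ContractingWith.fixedPoint _ hcontr
  refine ⟨y, y.2, congrArg Subtype.val (hcontr.fixedPoint_isFixedPt), fun z hz hfz => ?_,
    fun x hx => ?_⟩
  · exact congrArg Subtype.val (hcontr.fixedPoint_unique (x := ⟨z, hz⟩) (Subtype.ext hfz))
  · have := continuous_subtype_val.tendsto y |>.comp (hcontr.tendsto_iterate_fixedPoint ⟨x, hx⟩)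
    simpa [comp_def, hmaps.iterate_restrict] using this

theorem dgc_uniqueness_general (d : ℕ) (H : EuclideanSpace ℝ (Fin d) → ℝ)
    (y₀ ybar : EuclideanSpace ℝ (Fin d))
    (dg : EuclideanSpace ℝ (Fin d) → EuclideanSpace ℝ (Fin d) → EuclideanSpace ℝ (Fin d))
    (S : Set (EuclideanSpace ℝ (Fin d))) (hS : S.Nonempty) (hSclosed : IsClosed S)
    (g : EuclideanSpace ℝ (Fin d) → EuclideanSpace ℝ (Fin d))
    (hg : ∀ v, g v = ybar + ((H y₀ - H ybar) / ‖dg ybar v‖ ^ 2) • dg ybar v)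
    (hmaps : Set.MapsTo g S S)
    (C L₀ : ℝ) (hC : 0 < C)
    (hlow : ∀ v ∈ S, C ≤ ‖dg ybar v‖)
    (hlip : ∀ v ∈ S, ∀ w ∈ S, ‖dg ybar w - dg ybar v‖ ≤ L₀ * ‖w - v‖)
    (hcontract : (L₀ / C ^ 2) * |H y₀ - H ybar| < 1) :
    ∃ y ∈ S, y = g y ∧ (∀ z ∈ S, z = g z → z = y) ∧
      ∀ x₀ ∈ S, Tendsto (fun n => g^[n] x₀) atTop (𝓝 y) := by
  have hglip : LipschitzOnWith (Real.toNNReal (L₀ / C ^ 2 * |H y₀ - H ybar|)) g S := by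
    refine LipschitzOnWith.of_dist_le' fun w hw v hv => ?_
    rw [hg, hg, dist_add_left]
    exact dist_div_norm_sq_smul_le _ hC hlow (by simpa only [dist_eq_norm] using hlip) hv hw
  obtain ⟨y, hyS, hy, huniq, htend⟩ := hglip.exists_unique_isFixedPt_tendsto_iterate
    (Real.toNNReal_lt_one.2 hcontract) hmaps hS hSclosed.isComplete
  exact ⟨y, hyS, hy.symm, fun z hz hzg => huniq z hz hzg.symm, htend⟩

/-- Uniqueness of the DGC correction via the Banach fixed point theorem. -/
theorem dgc_uniqueness (d : ℕ) (H : EuclideanSpace ℝ (Fin d) → ℝ)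
    (y₀ ybar : EuclideanSpace ℝ (Fin d))
    (dg : EuclideanSpace ℝ (Fin d) → EuclideanSpace ℝ (Fin d) → EuclideanSpace ℝ (Fin d))
    (S : Set (EuclideanSpace ℝ (Fin d))) (hS : S.Nonempty) (hSclosed : IsClosed S)
    (g : EuclideanSpace ℝ (Fin d) → EuclideanSpace ℝ (Fin d))
    (hg : ∀ v, g v = ybar + ((H y₀ - H ybar) / ‖dg ybar v‖ ^ 2) • dg ybar v)
    (hmaps : Set.MapsTo g S S)
    (C L₀ : ℝ) (hC : 0 < C) (hL₀ : 0 < L₀)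
    (hlow : ∀ v ∈ S, C ≤ ‖dg ybar v‖)
    (hlip : ∀ v ∈ S, ∀ w ∈ S, ‖dg ybar w - dg ybar v‖ ≤ L₀ * ‖w - v‖)
    (hcontract : (L₀ / C ^ 2) * |H y₀ - H ybar| < 1) :
    ∃ y ∈ S, y = g y ∧ (∀ z ∈ S, z = g z → z = y) ∧
      ∀ x₀ ∈ S, Tendsto (fun n => g^[n] x₀) atTop (𝓝 y) :=
  dgc_uniqueness_general d H y₀ ybar dg S hS hSclosed g hg hmaps C L₀ hC hlow hlip hcontract
end

section
/- Conservation of the DGC method (single invariant): if y satisfies y = ȳ + [(H(y₀) − H(ȳ))/‖∇̄H(ȳ, y)‖²] ∇̄H(ȳ, y) with ∇̄H(ȳ, y) ≠ 0, and ∇̄H satisfies the discrete gradient identity ∇̄H(x, z)·(z − x) = H(z) − H(x), then H(y) = H(y₀). -/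
open InnerProductSpace

theorem real_inner_div_norm_sq_smul_self {E : Type*} [NormedAddCommGroup E]
    [InnerProductSpace ℝ E] (c : ℝ) {g : E} (hg : g ≠ 0) :
    ⟪g, (c / ‖g‖ ^ 2) • g⟫_ℝ = c := by
  rw [real_inner_smul_right, real_inner_self_eq_norm_sq,
    div_mul_cancel₀ c (pow_ne_zero 2 (norm_ne_zero_iff.mpr hg))]

/-- Conservation of the DGC method with a single invariant. -/
theorem dgc_conservation (d : ℕ) (H : EuclideanSpace ℝ (Fin d) → ℝ)
    (y₀ ybar y : EuclideanSpace ℝ (Fin d))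
    (dg : EuclideanSpace ℝ (Fin d) → EuclideanSpace ℝ (Fin d) → EuclideanSpace ℝ (Fin d))
    (hdg : ∀ x z, ⟪dg x z, z - x⟫_ℝ = H z - H x)
    (hne : dg ybar y ≠ 0)
    (hy : y = ybar + ((H y₀ - H ybar) / ‖dg ybar y‖ ^ 2) • dg ybar y) :
    H y = H y₀ := by
  have hstep : y - ybar = ((H y₀ - H ybar) / ‖dg ybar y‖ ^ 2) • dg ybar y :=
    sub_eq_of_eq_add' hy
  have hchain := hdg ybar y
  rw [hstep, real_inner_div_norm_sq_smul_self _ hne] at hchain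
  linarith
end

section
/- Consistency of the DGC correction: suppose the exact point y* satisfies ‖ȳ − y*‖ ≤ K h^{p+1} (predictor of order p), H is continuously differentiable with gradient bounded by M on the segment joining ȳ and y*, H(y₀) = H(y*), and ‖∇̄H(ȳ, y)‖ ≥ C > 0 at the corrected value y. Then the corrected value satisfies ‖y − y*‖ ≤ (1 + M/C) K h^{p+1}. -/
/-! Since `H y₀ = H y*`, the correction moves `ȳ` by at most `|H y* - H ȳ| / C`, which the mean
value inequality bounds by `(M / C) ‖ȳ - y*‖`; the triangle inequality through `ȳ` adds `‖ȳ - y*‖`. -/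

section MeanValue

variable {E : Type*} [NormedAddCommGroup E] [InnerProductSpace ℝ E] [CompleteSpace E]

theorem abs_sub_le_of_norm_gradient_le_on_segment {f : E → ℝ} (hf : Differentiable ℝ f)
    {a b : E} {M : ℝ} (hbound : ∀ t ∈ segment ℝ a b, ‖gradient f t‖ ≤ M) :
    |f b - f a| ≤ M * ‖b - a‖ := by
  have hfderiv : ∀ t ∈ segment ℝ a b, ‖fderiv ℝ f t‖ ≤ M := fun t ht => by
    simpa only [gradient, LinearIsometryEquiv.norm_map] using hbound t ht
  simpa only [Real.norm_eq_abs] using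
    (convex_segment a b).norm_image_sub_le_of_norm_fderiv_le (fun t _ => hf t) hfderiv
      (left_mem_segment ℝ a b) (right_mem_segment ℝ a b)

end MeanValue

section Correction

variable {E : Type*} [NormedAddCommGroup E] [NormedSpace ℝ E]

theorem norm_div_norm_sq_smul (c : ℝ) {v : E} (hv : v ≠ 0) :
    ‖(c / ‖v‖ ^ 2) • v‖ = |c| / ‖v‖ := by
  have hv' : ‖v‖ ≠ 0 := norm_ne_zero_iff.mpr hv
  rw [norm_smul, Real.norm_eq_abs, abs_div, abs_of_nonneg (sq_nonneg ‖v‖)]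
  field_simp

theorem norm_div_norm_sq_smul_le (c : ℝ) {v : E} {C : ℝ} (hC : 0 < C) (hv : C ≤ ‖v‖) :
    ‖(c / ‖v‖ ^ 2) • v‖ ≤ |c| / C := by
  have hv0 : v ≠ 0 := norm_pos_iff.mp (hC.trans_le hv)
  rw [norm_div_norm_sq_smul c hv0]
  gcongr

end Correction

theorem dgc_consistency_general (d : ℕ) (H : EuclideanSpace ℝ (Fin d) → ℝ) (hH : ContDiff ℝ 1 H)
    (y₀ ybar ystar y : EuclideanSpace ℝ (Fin d))
    (dg : EuclideanSpace ℝ (Fin d) → EuclideanSpace ℝ (Fin d) → EuclideanSpace ℝ (Fin d))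
    (h K M C : ℝ) (hM : 0 < M) (hC : 0 < C) (p : ℕ)
    (hpred : ‖ybar - ystar‖ ≤ K * h ^ (p + 1))
    (hgrad : ∀ t ∈ segment ℝ ybar ystar, ‖gradient H t‖ ≤ M)
    (hinv : H y₀ = H ystar)
    (hlow : C ≤ ‖dg ybar y‖)
    (hy : y = ybar + ((H y₀ - H ybar) / ‖dg ybar y‖ ^ 2) • dg ybar y) :
    ‖y - ystar‖ ≤ (1 + M / C) * K * h ^ (p + 1) := by
  have hmv : |H ystar - H ybar| ≤ M * ‖ybar - ystar‖ := by
    rw [norm_sub_rev]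
    exact abs_sub_le_of_norm_gradient_le_on_segment (hH.differentiable one_ne_zero) hgrad
  have hcorr : ‖y - ybar‖ ≤ M / C * ‖ybar - ystar‖ := by
    calc ‖y - ybar‖ ≤ |H ystar - H ybar| / C := by
          rw [hy, add_sub_cancel_left, ← hinv]
          exact norm_div_norm_sq_smul_le _ hC hlow
      _ ≤ M * ‖ybar - ystar‖ / C := by gcongr
      _ = M / C * ‖ybar - ystar‖ := by ring
  calc ‖y - ystar‖ ≤ ‖y - ybar‖ + ‖ybar - ystar‖ := norm_sub_le_norm_sub_add_norm_sub _ _ _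
    _ ≤ (1 + M / C) * ‖ybar - ystar‖ := by linarith
    _ ≤ (1 + M / C) * (K * h ^ (p + 1)) := by gcongr
    _ = (1 + M / C) * K * h ^ (p + 1) := by ring

/-- Consistency of the DGC correction step. -/
theorem dgc_consistency (d : ℕ) (H : EuclideanSpace ℝ (Fin d) → ℝ) (hH : ContDiff ℝ 1 H)
    (y₀ ybar ystar y : EuclideanSpace ℝ (Fin d))
    (dg : EuclideanSpace ℝ (Fin d) → EuclideanSpace ℝ (Fin d) → EuclideanSpace ℝ (Fin d))
    (h K M C : ℝ) (hh : 0 < h) (hK : 0 < K) (hM : 0 < M) (hC : 0 < C) (p : ℕ)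
    (hpred : ‖ybar - ystar‖ ≤ K * h ^ (p + 1))
    (hgrad : ∀ t ∈ segment ℝ ybar ystar, ‖gradient H t‖ ≤ M)
    (hinv : H y₀ = H ystar)
    (hlow : C ≤ ‖dg ybar y‖)
    (hy : y = ybar + ((H y₀ - H ybar) / ‖dg ybar y‖ ^ 2) • dg ybar y) :
    ‖y - ystar‖ ≤ (1 + M / C) * K * h ^ (p + 1) :=
  dgc_consistency_general d H hH y₀ ybar ystar y dg h K M C hM hC p hpred hgrad hinv hlow hy
end

section
/- One-step stability estimate for the DGC method: under the assumptions that ‖∇̄H‖ ≥ C on relevant arguments, ψ_h(u) = φ_h(u)·∇̄H(u + hφ_h(u), u) is Lipschitz with constant L_ψ and bounded by C₁, φ_h is Lipschitz with constant L_φ, and ∇̄H is Lipschitz with constant L₀ in both arguments, the DGC updates y_{n+1}, z_{n+1} from y_n, z_n satisfy (1 − hC₁L₀/C²)‖y_{n+1} − z_{n+1}‖ ≤ [hL_ψ/C + (1 + hC₁L₀/C²)(1 + hL_φ)]‖y_n − z_n‖. -/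
open InnerProductSpace

/-!
`yₙ₊₁ - zₙ₊₁` is the difference `ȳ - z̄` of the explicit predictors `ȳ = yₙ + h • φ yₙ`, which is
at most `(1 + h Lφ) ‖yₙ - zₙ‖`, minus the difference of the corrections `(a / ‖u‖²) • u` with
`a = h ψ yₙ`, `u = ∇̄H(ȳ, yₙ₊₁)`. Splitting the latter as
`((a - b) / ‖u‖²) • u + b • (u / ‖u‖² - v / ‖v‖²)` and using the inversion identity
`‖u / ‖u‖² - v / ‖v‖²‖ = ‖u - v‖ / (‖u‖ ‖v‖)` bounds it by `h Lψ ‖yₙ - zₙ‖ / C` plus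
`h C₁ L₀ / C²` times `‖ȳ - z̄‖ + ‖yₙ₊₁ - zₙ₊₁‖`. Since the scheme is implicit, `‖yₙ₊₁ - zₙ₊₁‖`
appears on the right as well and is absorbed into the left-hand side.
-/

theorem norm_div_norm_sq_smul_sub_le_s11 {E : Type*} [NormedAddCommGroup E] [InnerProductSpace ℝ E]
    {C : ℝ} (hC : 0 < C) {u v : E} (hu : C ≤ ‖u‖) (hv : C ≤ ‖v‖) (a b : ℝ) :
    ‖(a / ‖u‖ ^ 2) • u - (b / ‖v‖ ^ 2) • v‖ ≤ |a - b| / C + |b| * ‖u - v‖ / C ^ 2 := by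
  have hu₀ : 0 < ‖u‖ := hC.trans_le hu
  have hv₀ : 0 < ‖v‖ := hC.trans_le hv
  have hinv : ‖(‖u‖ ^ 2)⁻¹ • u - (‖v‖ ^ 2)⁻¹ • v‖ = ‖u - v‖ / (‖u‖ * ‖v‖) := by
    have := dist_div_norm_sq_smul (norm_pos_iff.1 hu₀) (norm_pos_iff.1 hv₀) 1
    simp only [dist_eq_norm, one_div, inv_pow, one_pow] at this
    rw [this, inv_mul_eq_div]
  have hsplit : (a / ‖u‖ ^ 2) • u - (b / ‖v‖ ^ 2) • v =
      ((a - b) / ‖u‖ ^ 2) • u + b • ((‖u‖ ^ 2)⁻¹ • u - (‖v‖ ^ 2)⁻¹ • v) := by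
    simp only [smul_sub, smul_smul, ← div_eq_mul_inv]
    module
  calc ‖(a / ‖u‖ ^ 2) • u - (b / ‖v‖ ^ 2) • v‖
      ≤ ‖((a - b) / ‖u‖ ^ 2) • u‖ + ‖b • ((‖u‖ ^ 2)⁻¹ • u - (‖v‖ ^ 2)⁻¹ • v)‖ :=
        hsplit ▸ norm_add_le _ _
    _ = |a - b| / ‖u‖ + |b| * (‖u - v‖ / (‖u‖ * ‖v‖)) := by
        rw [norm_smul, norm_smul, hinv, Real.norm_eq_abs, Real.norm_eq_abs, abs_div,
          abs_of_pos (by positivity : (0 : ℝ) < ‖u‖ ^ 2)]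
        field_simp
    _ ≤ |a - b| / C + |b| * (‖u - v‖ / (C * C)) := by gcongr
    _ = |a - b| / C + |b| * ‖u - v‖ / C ^ 2 := by ring

theorem norm_add_smul_sub_add_smul_le {E : Type*} [SeminormedAddCommGroup E] [NormedSpace ℝ E]
    {h L : ℝ} (hh : 0 ≤ h) {φ : E → E} (hφ : ∀ u v, ‖φ u - φ v‖ ≤ L * ‖u - v‖) (y z : E) :
    ‖(y + h • φ y) - (z + h • φ z)‖ ≤ (1 + h * L) * ‖y - z‖ :=
  calc ‖(y + h • φ y) - (z + h • φ z)‖ = ‖(y - z) + h • (φ y - φ z)‖ := by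
        rw [smul_sub]; abel_nf
    _ ≤ ‖y - z‖ + h * ‖φ y - φ z‖ := by
        grw [norm_add_le, norm_smul, Real.norm_of_nonneg hh]
    _ ≤ ‖y - z‖ + h * (L * ‖y - z‖) := by grw [hφ]
    _ = (1 + h * L) * ‖y - z‖ := by ring

theorem dgc_stability_one_step_general (d : ℕ)
    (h : ℝ) (hh : 0 < h)
    (φ : EuclideanSpace ℝ (Fin d) → EuclideanSpace ℝ (Fin d))
    (dg : EuclideanSpace ℝ (Fin d) → EuclideanSpace ℝ (Fin d) → EuclideanSpace ℝ (Fin d))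
    (ψ : EuclideanSpace ℝ (Fin d) → ℝ)
    (C C₁ L₀ Lφ Lψ : ℝ) (hC : 0 < C) (hL₀ : 0 < L₀)
    (hlow : ∀ x z, C ≤ ‖dg x z‖)
    (hψlip : ∀ u v, |ψ u - ψ v| ≤ Lψ * ‖u - v‖)
    (hψbound : ∀ u, |ψ u| ≤ C₁)
    (hφlip : ∀ u v, ‖φ u - φ v‖ ≤ Lφ * ‖u - v‖)
    (hdglip : ∀ x z x' z', ‖dg x z - dg x' z'‖ ≤ L₀ * (‖x - x'‖ + ‖z - z'‖))
    (yn zn yn1 zn1 : EuclideanSpace ℝ (Fin d))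
    (hy : yn1 = (yn + h • φ yn) -
      ((h * ψ yn) / ‖dg (yn + h • φ yn) yn1‖ ^ 2) • dg (yn + h • φ yn) yn1)
    (hz : zn1 = (zn + h • φ zn) -
      ((h * ψ zn) / ‖dg (zn + h • φ zn) zn1‖ ^ 2) • dg (zn + h • φ zn) zn1) :
    (1 - h * C₁ * L₀ / C ^ 2) * ‖yn1 - zn1‖ ≤
      (h * Lψ / C + (1 + h * C₁ * L₀ / C ^ 2) * (1 + h * Lφ)) * ‖yn - zn‖ := by
  set yb := yn + h • φ yn
  set zb := zn + h • φ zn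
  set cy := (h * ψ yn / ‖dg yb yn1‖ ^ 2) • dg yb yn1
  set cz := (h * ψ zn / ‖dg zb zn1‖ ^ 2) • dg zb zn1
  have hC₁ : 0 ≤ C₁ := (abs_nonneg _).trans (hψbound yn)
  have hbar : ‖yb - zb‖ ≤ (1 + h * Lφ) * ‖yn - zn‖ :=
    norm_add_smul_sub_add_smul_le hh.le hφlip yn zn
  have hcorr : ‖cy - cz‖ ≤
      h * Lψ / C * ‖yn - zn‖ + h * C₁ * L₀ / C ^ 2 * (‖yb - zb‖ + ‖yn1 - zn1‖) :=
    calc ‖cy - cz‖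
        ≤ |h * ψ yn - h * ψ zn| / C + |h * ψ zn| * ‖dg yb yn1 - dg zb zn1‖ / C ^ 2 :=
          norm_div_norm_sq_smul_sub_le_s11 hC (hlow _ _) (hlow _ _) _ _
      _ ≤ h * (Lψ * ‖yn - zn‖) / C + h * C₁ * (L₀ * (‖yb - zb‖ + ‖yn1 - zn1‖)) / C ^ 2 := by
          rw [← mul_sub, abs_mul, abs_mul, abs_of_pos hh]
          gcongr
          exacts [hψlip _ _, hψbound _, hdglip _ _ _ _]
      _ = _ := by ring
  have hstep : ‖yn1 - zn1‖ ≤ ‖yb - zb‖ + ‖cy - cz‖ := by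
    conv_lhs => rw [hy, hz, sub_sub_sub_comm]
    exact norm_sub_le _ _
  calc (1 - h * C₁ * L₀ / C ^ 2) * ‖yn1 - zn1‖
      ≤ h * Lψ / C * ‖yn - zn‖ + (1 + h * C₁ * L₀ / C ^ 2) * ‖yb - zb‖ := by linarith
    _ ≤ h * Lψ / C * ‖yn - zn‖ + (1 + h * C₁ * L₀ / C ^ 2) * ((1 + h * Lφ) * ‖yn - zn‖) := by
        gcongr
    _ = _ := by ring

/-- One-step stability estimate for the DGC method. -/
theorem dgc_stability_one_step (d : ℕ) (H : EuclideanSpace ℝ (Fin d) → ℝ)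
    (h : ℝ) (hh : 0 < h)
    (φ : EuclideanSpace ℝ (Fin d) → EuclideanSpace ℝ (Fin d))
    (dg : EuclideanSpace ℝ (Fin d) → EuclideanSpace ℝ (Fin d) → EuclideanSpace ℝ (Fin d))
    (ψ : EuclideanSpace ℝ (Fin d) → ℝ)
    (hψdef : ∀ u, ψ u = ⟪φ u, dg (u + h • φ u) u⟫_ℝ)
    (C C₁ L₀ Lφ Lψ : ℝ) (hC : 0 < C) (hC₁ : 0 < C₁) (hL₀ : 0 < L₀) (hLφ : 0 < Lφ) (hLψ : 0 < Lψ)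
    (hlow : ∀ x z, C ≤ ‖dg x z‖)
    (hψlip : ∀ u v, |ψ u - ψ v| ≤ Lψ * ‖u - v‖)
    (hψbound : ∀ u, |ψ u| ≤ C₁)
    (hφlip : ∀ u v, ‖φ u - φ v‖ ≤ Lφ * ‖u - v‖)
    (hdglip : ∀ x z x' z', ‖dg x z - dg x' z'‖ ≤ L₀ * (‖x - x'‖ + ‖z - z'‖))
    (yn zn yn1 zn1 : EuclideanSpace ℝ (Fin d))
    (hy : yn1 = (yn + h • φ yn) -
      ((h * ψ yn) / ‖dg (yn + h • φ yn) yn1‖ ^ 2) • dg (yn + h • φ yn) yn1)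
    (hz : zn1 = (zn + h • φ zn) -
      ((h * ψ zn) / ‖dg (zn + h • φ zn) zn1‖ ^ 2) • dg (zn + h • φ zn) zn1) :
    (1 - h * C₁ * L₀ / C ^ 2) * ‖yn1 - zn1‖ ≤
      (h * Lψ / C + (1 + h * C₁ * L₀ / C ^ 2) * (1 + h * Lφ)) * ‖yn - zn‖ :=
  dgc_stability_one_step_general d h hh φ dg ψ C C₁ L₀ Lφ Lψ hC hL₀ hlow hψlip hψbound hφlip hdglip
    yn zn yn1 zn1 hy hz
end

section
/- Conservation of the multi-invariant DGC method: if y = ȳ + Σᵢ λᵢ ∇̄Hᵢ(ȳ, y) where λ ∈ ℝ^k solves Aλ = b with A_{ij} = ∇̄Hᵢ(ȳ,y)·∇̄Hⱼ(ȳ,y) and bⱼ = Hⱼ(y₀) − Hⱼ(ȳ), and each ∇̄Hᵢ satisfies the discrete gradient identity ∇̄Hᵢ(x,z)·(z−x) = Hᵢ(z) − Hᵢ(x), then Hⱼ(y) = Hⱼ(y₀) for every j = 1,…,k. -/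
open InnerProductSpace

section DiscreteGradient

variable {E : Type*} [NormedAddCommGroup E] [InnerProductSpace ℝ E]

theorem apply_eq_of_inner_discreteGradient_eq {H : E → ℝ} {dg : E → E → E}
    (hdg : ∀ x z, ⟪dg x z, z - x⟫_ℝ = H z - H x) {x z y₀ : E}
    (h : ⟪dg x z, z - x⟫_ℝ = H y₀ - H x) : H z = H y₀ := by
  linarith [(hdg x z).symm.trans h]

theorem inner_sub_eq_of_eq_add_sum_smul {ι : Type*} [Fintype ι] {x z : E} {g : ι → E}
    {lam : ι → ℝ} (hz : z = x + ∑ i, lam i • g i) (v : E) :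
    ⟪v, z - x⟫_ℝ = ∑ i, lam i * ⟪v, g i⟫_ℝ := by
  rw [hz, add_sub_cancel_left, inner_sum]
  simp only [real_inner_smul_right]

end DiscreteGradient

/-- Conservation of the multi-invariant DGC method. -/
theorem dgc_multi_conservation (d k : ℕ)
    (H : Fin k → EuclideanSpace ℝ (Fin d) → ℝ)
    (y₀ ybar y : EuclideanSpace ℝ (Fin d))
    (dg : Fin k → EuclideanSpace ℝ (Fin d) → EuclideanSpace ℝ (Fin d) → EuclideanSpace ℝ (Fin d))
    (hdg : ∀ i x z, ⟪dg i x z, z - x⟫_ℝ = H i z - H i x)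
    (lam : Fin k → ℝ)
    (hlam : ∀ j, ∑ i, lam i * ⟪dg j ybar y, dg i ybar y⟫_ℝ = H j y₀ - H j ybar)
    (hy : y = ybar + ∑ i, lam i • dg i ybar y) :
    ∀ j, H j y = H j y₀ := fun j =>
  apply_eq_of_inner_discreteGradient_eq (hdg j)
    ((inner_sub_eq_of_eq_add_sum_smul hy (dg j ybar y)).trans (hlam j))
end
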